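/- Fix an integer m ≥ 1, let b_m be the m-th Taylor coefficient of (1−w)^{−1/2} at 0, and let |u| be sufficiently small (e.g. |u| < 1/2). Then −(i/m)·∫₀^{2πm} sin(t)/√(1 − u e^{it/m}) dt = π b_m u^m. -/

import Mathlib

/-!
Since `‖u e^{it/m}‖ = ‖u‖ < 1`, the binomial series `Σ b_k u^k e^{ikt/m}` converges to
`(1 - u e^{it/m})^{-1/2}` with the summable majorant `‖b_k u^k‖`, so it may be integrated
termwise. Writing `sin t = (e^{-it} - e^{it}) · i/2`, the `k`-th term integrates to
`i/2 · (∫ e^{i(k-m)t/m} - ∫ e^{i(k+m)t/m})` over `[0, 2πm]`, and `e^{int/m}` integrates to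
zero over `[0, 2πm]` unless `n = 0`; so only `k = m` survives, contributing `b_m u^m · iπm`.
-/

open Complex Real

theorem integral_exp_int_mul_I_div_mul {T : ℝ} (hT : T ≠ 0) (n : ℤ) :
    ∫ t in (0:ℝ)..(2 * π * T), Complex.exp (n * Complex.I / T * t)
      = if n = 0 then (2 * π * T : ℂ) else 0 := by
  split_ifs with hn
  · simp [hn]
  · have hT' : (T : ℂ) ≠ 0 := ofReal_ne_zero.mpr hT
    have hc : (n * Complex.I / T : ℂ) ≠ 0 := by simp [hn, hT, Complex.I_ne_zero]
    have hperiod :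
        (n * Complex.I / T : ℂ) * ((2 * π * T : ℝ) : ℂ) = n * (2 * π * Complex.I) := by
      push_cast; field_simp
    rw [integral_exp_mul_complex hc, hperiod, Complex.exp_int_mul_two_pi_mul_I]
    simp

theorem sin_mul_exp_pow_eq {m : ℕ} (hm : m ≠ 0) (k : ℕ) (t : ℝ) :
    Complex.sin t * Complex.exp (Complex.I * t / m) ^ k
      = Complex.I / 2 * (Complex.exp (((k - m : ℤ) : ℂ) * Complex.I / (m : ℝ) * t)
          - Complex.exp (((k + m : ℤ) : ℂ) * Complex.I / (m : ℝ) * t)) := by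
  have hm' : (m : ℂ) ≠ 0 := Nat.cast_ne_zero.mpr hm
  have hsub : ((k - m : ℤ) : ℂ) * Complex.I / (m : ℝ) * t
      = -t * Complex.I + k * (Complex.I * t / m) := by
    push_cast; field_simp; ring
  have hadd : ((k + m : ℤ) : ℂ) * Complex.I / (m : ℝ) * t
      = t * Complex.I + k * (Complex.I * t / m) := by
    push_cast; field_simp; ring
  rw [Complex.sin, ← Complex.exp_nat_mul, hsub, hadd, Complex.exp_add, Complex.exp_add]
  ring

theorem integral_sin_mul_exp_pow {m : ℕ} (hm : m ≠ 0) (k : ℕ) :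
    ∫ t in (0:ℝ)..(2 * π * m), Complex.sin t * Complex.exp (Complex.I * t / m) ^ k
      = if k = m then Complex.I * π * m else 0 := by
  have hmR : (m : ℝ) ≠ 0 := Nat.cast_ne_zero.mpr hm
  simp_rw [sin_mul_exp_pow_eq hm k]
  rw [intervalIntegral.integral_const_mul, intervalIntegral.integral_sub
    ((by fun_prop : Continuous _).intervalIntegrable _ _)
    ((by fun_prop : Continuous _).intervalIntegrable _ _),
    integral_exp_int_mul_I_div_mul hmR, integral_exp_int_mul_I_div_mul hmR,
    if_neg (by omega : (k + m : ℤ) ≠ 0)]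
  by_cases hk : k = m
  · subst hk
    simp only [sub_self, ↓reduceIte, ofReal_natCast, sub_zero]
    ring
  · rw [if_neg (by omega), if_neg hk]; simp

theorem norm_sin_ofReal_le_one (t : ℝ) : ‖Complex.sin t‖ ≤ 1 := by
  rw [← ofReal_sin, norm_real, Real.norm_eq_abs]
  exact abs_sin_le_one t

theorem norm_exp_I_mul_ofReal_div_natCast (t : ℝ) (m : ℕ) :
    ‖Complex.exp (Complex.I * t / m)‖ = 1 := by
  rw [mul_div_assoc, ← ofReal_natCast, ← ofReal_div, norm_exp_I_mul_ofReal]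

theorem hasSum_intervalIntegral_of_norm_le {ι E : Type*} [Countable ι] [NormedAddCommGroup E]
    [NormedSpace ℝ E] {F : ι → ℝ → E} {f : ℝ → E} {M : ι → ℝ} {a b : ℝ}
    (hF : ∀ i, Continuous (F i)) (hFM : ∀ i t, ‖F i t‖ ≤ M i) (hM : Summable M)
    (hf : ∀ t, HasSum (F · t) (f t)) :
    HasSum (fun i => ∫ t in a..b, F i t) (∫ t in a..b, f t) :=
  intervalIntegral.hasSum_integral_of_dominated_convergence (fun i _ => M i)
    (fun i => (hF i).aestronglyMeasurable) (fun i => .of_forall fun t _ => hFM i t)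
    (.of_forall fun _ _ => hM) intervalIntegrable_const (.of_forall fun t _ => hf t)

/-- For an integer `m ≥ 1` and `|u| < 1/2`,
`−(i/m)·∫₀^{2πm} sin(t)/√(1 − u e^{it/m}) dt = π b_m u^m`,
where `b_k` are the Taylor coefficients of the principal branch of `(1−w)^{−1/2}` at `0`. -/
theorem integral_formula_I_m (m : ℕ) (hm : 1 ≤ m) (b : ℕ → ℂ)
    (hb : ∀ w : ℂ, ‖w‖ < 1 →
      HasSum (fun k : ℕ => b k * w ^ k) ((1 - w) ^ (-(1/2 : ℂ))))
    (u : ℂ) (hu : ‖u‖ < 1/2) :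
    -(Complex.I / (m : ℂ)) *
      ∫ t in (0:ℝ)..(2 * π * m),
        Complex.sin (t : ℂ) *
          (1 - u * Complex.exp (Complex.I * (t : ℂ) / (m : ℂ))) ^ (-(1/2 : ℂ))
      = (π : ℂ) * b m * u ^ m := by
  have hm0 : m ≠ 0 := by omega
  have hnorm : ∀ t : ℝ, ‖u * Complex.exp (Complex.I * t / m)‖ = ‖u‖ := fun t => by
    rw [norm_mul, norm_exp_I_mul_ofReal_div_natCast, mul_one]
  have hseries : HasSum
      (fun k => b k * u ^ k *
        ∫ t in (0:ℝ)..(2 * π * m), Complex.sin t * Complex.exp (Complex.I * t / m) ^ k)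
      (∫ t in (0:ℝ)..(2 * π * m),
        Complex.sin t * (1 - u * Complex.exp (Complex.I * t / m)) ^ (-(1/2 : ℂ))) := by
    simp_rw [← intervalIntegral.integral_const_mul]
    refine hasSum_intervalIntegral_of_norm_le (fun k => by fun_prop)
      (fun k t => ?_) (hb u (by linarith)).summable.norm (fun t => ?_)
    · rw [norm_mul _ (_ * _), norm_mul (Complex.sin _), norm_pow,
        norm_exp_I_mul_ofReal_div_natCast, one_pow, mul_one]
      exact mul_le_of_le_one_right (norm_nonneg _) (norm_sin_ofReal_le_one t)
    · refine ((hb _ ((hnorm t).trans_lt (by linarith))).mul_left (Complex.sin t)).congr_fun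
        fun k => ?_
      ring
  simp_rw [integral_sin_mul_exp_pow hm0, mul_ite, mul_zero] at hseries
  rw [hseries.unique (hasSum_single m fun k hk => if_neg hk), if_pos rfl]
  have hm' : (m : ℂ) ≠ 0 := Nat.cast_ne_zero.mpr hm0
  field_simp
  linear_combination -(b m * u ^ m) * Complex.I_sq
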